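/- arXiv:1510.03574 — 3 statements merged into one kernel-verified Lean document; each statement's English description precedes it below -/
import Mathlib

section
/- Let Λ be a ring. If (P, ε_P) is a differential Λ-module admitting a projective flag (i.e. P = P_l ⊕ ⋯ ⊕ P_0 with each P_i projective and ε_P strictly lower triangular), then every morphism of differential modules from (P, ε_P) to an acyclic differential module is null-homotopic. -/
/-!
Filter `P` by the submodules `P_j ⊕ ⋯ ⊕ P_0` and build the homotopy one summand at a time.
Once `s` is a homotopy on the summands below `P_a`, the error `r = f - (s ε + ε_N s)` is a
morphism of differential modules vanishing there. Since `ε` maps `P_a` into lower summands,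
`ε_N ∘ r` vanishes on `P_a`, so by acyclicity `r|P_a` lands in the image of `ε_N` and lifts
through it by projectivity of `P_a`; the lift, extended by zero, corrects `s` on `P_a` without
changing it below.
-/

open DirectSum

theorem Module.Projective.exists_comp_eq_of_range_le {Λ Q M N : Type*} [Ring Λ]
    [AddCommGroup Q] [Module Λ Q] [Module.Projective Λ Q] [AddCommGroup M] [Module Λ M]
    [AddCommGroup N] [Module Λ N] {e : M →ₗ[Λ] N} {g : Q →ₗ[Λ] N}
    (h : LinearMap.range g ≤ LinearMap.range e) : ∃ t : Q →ₗ[Λ] M, e ∘ₗ t = g := by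
  obtain ⟨t, ht⟩ := Module.projective_lifting_property e.rangeRestrict
    (g.codRestrict _ fun x => h ⟨x, rfl⟩) e.surjective_rangeRestrict
  exact ⟨t, LinearMap.ext fun x => congrArg Subtype.val (LinearMap.congr_fun ht x)⟩

theorem nullHomotopy_comp_eq_comp {Λ M N : Type*} [Ring Λ] [AddCommGroup M] [Module Λ M]
    [AddCommGroup N] [Module Λ N] {εM : M →ₗ[Λ] M} {εN : N →ₗ[Λ] N}
    (hM : εM ∘ₗ εM = 0) (hN : εN ∘ₗ εN = 0) (s : M →ₗ[Λ] N) :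
    (s ∘ₗ εM + εN ∘ₗ s) ∘ₗ εM = εN ∘ₗ (s ∘ₗ εM + εN ∘ₗ s) := by
  rw [LinearMap.add_comp, LinearMap.comp_add, LinearMap.comp_assoc, hM, LinearMap.comp_zero,
    ← LinearMap.comp_assoc s εN, hN, LinearMap.zero_comp, LinearMap.comp_assoc, zero_add, add_zero]

namespace DirectSum

variable {Λ ι N : Type*} [Ring Λ] [DecidableEq ι] {P : ι → Type*} [∀ i, AddCommGroup (P i)]
  [∀ i, Module Λ (P i)]

theorem linearMap_apply_eq_zero [Fintype ι] [AddCommGroup N] [Module Λ N]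
    {g : (⨁ i, P i) →ₗ[Λ] N} {S : Set ι} (hg : ∀ i ∈ S, g ∘ₗ lof Λ ι P i = 0)
    {y : ⨁ i, P i} (hy : ∀ i ∉ S, y i = 0) : g y = 0 := by
  rw [← sum_univ_of y, map_sum]
  refine Finset.sum_eq_zero fun i _ => ?_
  by_cases hi : i ∈ S
  · exact LinearMap.congr_fun (hg i hi) (y i)
  · rw [hy i hi, map_zero, map_zero]

theorem component_lof_of_ne {i j : ι} (h : j ≠ i) (x : P j) :
    component Λ ι P i (lof Λ ι P j x) = 0 := by
  rw [component.of, dif_neg h]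

end DirectSum

section Flag

variable {Λ ι N : Type*} [Ring Λ] [DecidableEq ι] [LinearOrder ι] [Fintype ι]
  {P : ι → Type*} [∀ i, AddCommGroup (P i)] [∀ i, Module Λ (P i)] [AddCommGroup N] [Module Λ N]
  {ε : (⨁ i, P i) →ₗ[Λ] ⨁ i, P i} {εN : N →ₗ[Λ] N}

theorem exists_nullHomotopy_extend
    (htri : ∀ i j, ¬ i < j → component Λ ι P i ∘ₗ ε ∘ₗ lof Λ ι P j = 0)
    (hN : LinearMap.ker εN ≤ LinearMap.range εN) {r : (⨁ i, P i) →ₗ[Λ] N}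
    (hr : r ∘ₗ ε = εN ∘ₗ r) (a : ι) [Module.Projective Λ (P a)]
    (hra : ∀ j < a, r ∘ₗ lof Λ ι P j = 0) :
    ∃ t : (⨁ i, P i) →ₗ[Λ] N, ∀ j ≤ a, (r - (t ∘ₗ ε + εN ∘ₗ t)) ∘ₗ lof Λ ι P j = 0 := by
  have hcycle : LinearMap.range (r ∘ₗ lof Λ ι P a) ≤ LinearMap.ker εN := by
    rw [LinearMap.range_le_ker_iff, ← LinearMap.comp_assoc, ← hr]
    ext x
    exact linearMap_apply_eq_zero (S := {j | j < a}) hra fun i hi =>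
      LinearMap.congr_fun (htri i a hi) x
  obtain ⟨t, ht⟩ := Module.Projective.exists_comp_eq_of_range_le (hcycle.trans hN)
  refine ⟨t ∘ₗ component Λ ι P a, fun j hj => ?_⟩
  have hεa : ∀ x, component Λ ι P a (ε (lof Λ ι P j x)) = 0 := fun x =>
    LinearMap.congr_fun (htri a j hj.not_gt) x
  ext x
  rcases hj.lt_or_eq with hj | rfl
  · simpa [hεa, component_lof_of_ne hj.ne] using LinearMap.congr_fun (hra j hj) x
  · simpa [hεa, sub_eq_zero] using (LinearMap.congr_fun ht x).symm

theorem exists_nullHomotopy_on_lowerSet [∀ i, Module.Projective Λ (P i)] (hε : ε ∘ₗ ε = 0)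
    (htri : ∀ i j, ¬ i < j → component Λ ι P i ∘ₗ ε ∘ₗ lof Λ ι P j = 0)
    (hN : LinearMap.ker εN = LinearMap.range εN) {f : (⨁ i, P i) →ₗ[Λ] N}
    (hf : f ∘ₗ ε = εN ∘ₗ f) (S : Finset ι) (hS : IsLowerSet (S : Set ι)) :
    ∃ s : (⨁ i, P i) →ₗ[Λ] N, ∀ j ∈ S, (f - (s ∘ₗ ε + εN ∘ₗ s)) ∘ₗ lof Λ ι P j = 0 := by
  induction S using Finset.induction_on_max with
  | empty => exact ⟨0, by simp⟩
  | insert a S hlt ih =>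
    have hSlow : IsLowerSet (S : Set ι) := fun x y hyx hx =>
      (Finset.mem_insert.mp (hS hyx (Finset.mem_insert_of_mem hx))).resolve_left
        (hyx.trans_lt (hlt x hx)).ne
    obtain ⟨s, hs⟩ := ih hSlow
    have hr : (f - (s ∘ₗ ε + εN ∘ₗ s)) ∘ₗ ε = εN ∘ₗ (f - (s ∘ₗ ε + εN ∘ₗ s)) := by
      rw [LinearMap.sub_comp, LinearMap.comp_sub, hf,
        nullHomotopy_comp_eq_comp hε (LinearMap.range_le_ker_iff.mp hN.ge)]
    obtain ⟨t, ht⟩ := exists_nullHomotopy_extend htri hN.le hr a fun j hj =>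
      hs j ((Finset.mem_insert.mp (hS hj.le (Finset.mem_insert_self a S))).resolve_left hj.ne)
    refine ⟨s + t, fun j hj => ?_⟩
    have hsplit : f - ((s + t) ∘ₗ ε + εN ∘ₗ (s + t)) =
        f - (s ∘ₗ ε + εN ∘ₗ s) - (t ∘ₗ ε + εN ∘ₗ t) := by
      rw [LinearMap.add_comp, LinearMap.comp_add]
      abel
    rw [hsplit]
    obtain rfl | hj := Finset.mem_insert.mp hj
    · exact ht j le_rfl
    · exact ht j (hlt j hj).le

end Flag

theorem projective_flag_is_homotopically_projective_general
    (Λ : Type*) [Ring Λ] (l : ℕ)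
    (P : Fin (l + 1) → Type) [∀ j, AddCommGroup (P j)] [∀ j, Module Λ (P j)]
    [∀ j, Module.Projective Λ (P j)]
    (ε : (⨁ j, P j) →ₗ[Λ] ⨁ j, P j) (hε2 : ε ∘ₗ ε = 0)
    -- ε is strictly lower triangular with respect to the flag
    (htri : ∀ i j : Fin (l + 1), ¬ i < j →
      (DirectSum.component Λ (Fin (l + 1)) P i) ∘ₗ ε ∘ₗ (DirectSum.lof Λ (Fin (l + 1)) P j) = 0)
    -- an acyclic differential module (N, εN)
    (N : Type*) [AddCommGroup N] [Module Λ N]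
    (εN : N →ₗ[Λ] N)
    (hacyclic : LinearMap.ker εN = LinearMap.range εN)
    -- a morphism of differential modules (P, ε) → (N, εN)
    (f : (⨁ j, P j) →ₗ[Λ] N) (hf : f ∘ₗ ε = εN ∘ₗ f) :
    -- f is null-homotopic
    ∃ s : (⨁ j, P j) →ₗ[Λ] N, f = s ∘ₗ ε + εN ∘ₗ s := by
  obtain ⟨s, hs⟩ := exists_nullHomotopy_on_lowerSet hε2 htri hacyclic hf Finset.univ
    (by rw [Finset.coe_univ]; exact isLowerSet_univ)
  refine ⟨s, sub_eq_zero.mp (DirectSum.linearMap_ext Λ fun j => ?_)⟩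
  rw [LinearMap.zero_comp]
  exact hs j (Finset.mem_univ j)

theorem projective_flag_is_homotopically_projective
    (Λ : Type*) [Ring Λ] (l : ℕ)
    (P : Fin (l + 1) → Type) [∀ j, AddCommGroup (P j)] [∀ j, Module Λ (P j)]
    [∀ j, Module.Projective Λ (P j)]
    (ε : (⨁ j, P j) →ₗ[Λ] ⨁ j, P j) (hε2 : ε ∘ₗ ε = 0)
    -- ε is strictly lower triangular with respect to the flag
    (htri : ∀ i j : Fin (l + 1), ¬ i < j →
      (DirectSum.component Λ (Fin (l + 1)) P i) ∘ₗ ε ∘ₗ (DirectSum.lof Λ (Fin (l + 1)) P j) = 0)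
    -- an acyclic differential module (N, εN)
    (N : Type*) [AddCommGroup N] [Module Λ N]
    (εN : N →ₗ[Λ] N) (hεN : εN ∘ₗ εN = 0)
    (hacyclic : LinearMap.ker εN = LinearMap.range εN)
    -- a morphism of differential modules (P, ε) → (N, εN)
    (f : (⨁ j, P j) →ₗ[Λ] N) (hf : f ∘ₗ ε = εN ∘ₗ f) :
    -- f is null-homotopic
    ∃ s : (⨁ j, P j) →ₗ[Λ] N, f = s ∘ₗ ε + εN ∘ₗ s :=
  projective_flag_is_homotopically_projective_general Λ l P ε hε2 htri N εN hacyclic f hf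
end

section
/- Let k be a field, G the quiver 1 →^α 2 →^β 3 →^γ 4 →^δ 1, and Λ = kG/(γβα). Let P_3 be the indecomposable projective at vertex 3 and let ε = βαδγ : P_3 → P_3 be multiplication by the path βαδγ. Then ε ≠ 0 and ε² = 0, so (P_3, ε) is a nonzero differential Λ-module with nonzero differential whose underlying module is projective and indecomposable. -/
/-!
STATEMENT 15: Let Λ = kG/(γβα) where G is the cyclic quiver
1 →^α 2 →^β 3 →^γ 4 →^δ 1, and let ε = βαδγ ∈ e₃Λe₃, the endomorphism of the
indecomposable projective P₃ given by multiplication with the cycle βαδγ at vertex 3.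
Then ε ≠ 0 and ε² = 0, so (P₃, ε) is a nonzero differential Λ-module with nonzero
differential whose underlying module is projective and indecomposable.

We present Λ by generators and relations: generators X 0,…,X 3 (the vertex idempotents
e₁,…,e₄) and X 4,…,X 7 (the arrows α, β, γ, δ), with the path-algebra relations and the
zero relation γβα = 0.
-/

open FreeAlgebra

variable (k : Type) [Field k]

/-- The defining relations of the path algebra kG/(γβα) of the oriented 4-cycle. -/
inductive CycleRel' : FreeAlgebra k (Fin 8) → FreeAlgebra k (Fin 8) → Prop
  | orth (i j : Fin 4) :
      CycleRel' (ι k (Fin.castLE (by omega) i) * ι k (Fin.castLE (by omega) j))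
        (if i = j then ι k (Fin.castLE (by omega) i) else 0)
  | sum_idem :
      CycleRel' (ι k 0 + ι k 1 + ι k 2 + ι k 3) 1
  | alpha : CycleRel' (ι k 4) (ι k 1 * ι k 4 * ι k 0)  -- α = e₂ α e₁
  | beta : CycleRel' (ι k 5) (ι k 2 * ι k 5 * ι k 1)   -- β = e₃ β e₂
  | gamma : CycleRel' (ι k 6) (ι k 3 * ι k 6 * ι k 2)  -- γ = e₄ γ e₃
  | delta : CycleRel' (ι k 7) (ι k 0 * ι k 7 * ι k 3)  -- δ = e₁ δ e₄
  | gba : CycleRel' (ι k 6 * ι k 5 * ι k 4) 0          -- γβα = 0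

/-!
`ε = βαδγ` squares to zero because `ε² = βαδ(γβα)δγ` contains the zero relation. It is nonzero
because on `P₃ = Λe₃` it sends `e₃` to the basis vector `βαδγ`.
-/

theorem IsIdempotentElem.mul_eq_of_eq_mul_mul {R : Type*} [Semigroup R] {e x y : R}
    (he : IsIdempotentElem e) (h : x = e * x * y) : e * x = x := by
  rw [h, ← mul_assoc, ← mul_assoc, he.eq]

theorem IsIdempotentElem.mul_eq_of_eq_mul_mul' {R : Type*} [Semigroup R] {e x y : R}
    (he : IsIdempotentElem e) (h : x = y * x * e) : x * e = x := by
  rw [h, mul_assoc, he.eq]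

open Matrix

namespace CycleRel'

variable {k}

noncomputable abbrev gen (i : Fin 8) : RingQuot (CycleRel' k) :=
  RingQuot.mkAlgHom k (CycleRel' k) (ι k i)

noncomputable abbrev loopAtThree : RingQuot (CycleRel' k) :=
  gen 5 * gen 4 * gen 7 * gen 6

theorem isIdempotentElem_gen_two : IsIdempotentElem (gen (k := k) 2) := by
  simpa [IsIdempotentElem] using RingQuot.mkAlgHom_rel k (CycleRel'.orth (k := k) 2 2)

theorem gen_beta : gen (k := k) 5 = gen 2 * gen 5 * gen 1 := by
  simpa using RingQuot.mkAlgHom_rel k (CycleRel'.beta (k := k))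

theorem gen_gamma : gen (k := k) 6 = gen 3 * gen 6 * gen 2 := by
  simpa using RingQuot.mkAlgHom_rel k (CycleRel'.gamma (k := k))

theorem gen_gamma_mul_beta_mul_alpha : gen (k := k) 6 * gen 5 * gen 4 = 0 := by
  simpa using RingQuot.mkAlgHom_rel k (CycleRel'.gba (k := k))

theorem gen_two_mul_loopAtThree_mul_gen_two :
    gen 2 * loopAtThree (k := k) * gen 2 = loopAtThree := by
  have hβ := (isIdempotentElem_gen_two (k := k)).mul_eq_of_eq_mul_mul gen_beta
  have hγ := (isIdempotentElem_gen_two (k := k)).mul_eq_of_eq_mul_mul' gen_gamma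
  calc gen 2 * loopAtThree * gen 2
      = (gen 2 * gen 5) * gen 4 * gen 7 * (gen 6 * gen 2) := by simp only [mul_assoc]
    _ = loopAtThree := by rw [hβ, hγ]

theorem loopAtThree_mul_self : loopAtThree * loopAtThree = (0 : RingQuot (CycleRel' k)) :=
  calc loopAtThree * loopAtThree
      = gen 5 * gen 4 * gen 7 * (gen 6 * gen 5 * gen 4) * gen 7 * gen (k := k) 6 := by
        simp only [mul_assoc]
    _ = 0 := by rw [gen_gamma_mul_beta_mul_alpha]; simp

variable (k) in
/-- The action of `e₁, …, e₄, α, β, γ, δ` on `P₃ = Λe₃` in the basis `e₃, γ, δγ, αδγ, βαδγ`. -/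
noncomputable def repP₃ : Fin 8 → Matrix (Fin 5) (Fin 5) k
  | 0 => single 2 2 1
  | 1 => single 3 3 1
  | 2 => single 0 0 1 + single 4 4 1
  | 3 => single 1 1 1
  | 4 => single 3 2 1
  | 5 => single 4 3 1
  | 6 => single 1 0 1
  | 7 => single 2 1 1

theorem lift_repP₃_rel {x y : FreeAlgebra k (Fin 8)} (h : CycleRel' k x y) :
    FreeAlgebra.lift k (repP₃ k) x = FreeAlgebra.lift k (repP₃ k) y := by
  cases h with
  | orth i j =>
    fin_cases i <;> fin_cases j <;>
      simp [Fin.castLE, repP₃, single_mul_single_same, single_mul_single_of_ne, mul_add, add_mul]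
  | sum_idem =>
    ext i j
    fin_cases i <;> fin_cases j <;> simp [repP₃, single, one_apply]
  | _ => simp [repP₃, single_mul_single_same, single_mul_single_of_ne, mul_add, add_mul]

variable (k) in
noncomputable def toMatrix : RingQuot (CycleRel' k) →ₐ[k] Matrix (Fin 5) (Fin 5) k :=
  RingQuot.liftAlgHom k ⟨FreeAlgebra.lift k (repP₃ k), fun _ _ ↦ lift_repP₃_rel⟩

theorem toMatrix_loopAtThree : toMatrix k loopAtThree = single 4 0 1 := by
  simp [toMatrix, repP₃, single_mul_single_same]

theorem loopAtThree_ne_zero : loopAtThree (k := k) ≠ 0 := by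
  intro h
  have := congrFun₂ (congrArg (toMatrix k) h) 4 0
  simp [toMatrix_loopAtThree] at this

end CycleRel'

theorem differential_on_indecomposable_projective :
    letI Λ := RingQuot (CycleRel' k)
    letI a : Λ := RingQuot.mkAlgHom k (CycleRel' k) (ι k 4)   -- α
    letI b : Λ := RingQuot.mkAlgHom k (CycleRel' k) (ι k 5)   -- β
    letI c : Λ := RingQuot.mkAlgHom k (CycleRel' k) (ι k 6)   -- γ
    letI dd : Λ := RingQuot.mkAlgHom k (CycleRel' k) (ι k 7)  -- δ
    letI e₃ : Λ := RingQuot.mkAlgHom k (CycleRel' k) (ι k 2)  -- the idempotent at vertex 3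
    letI ε : Λ := b * a * dd * c                              -- ε = βαδγ
    -- ε is an endomorphism of P₃ = e₃Λ: ε ∈ e₃ Λ e₃
    (e₃ * ε * e₃ = ε) ∧
    -- ε is nonzero
    ε ≠ 0 ∧
    -- ε squares to zero
    ε * ε = 0 :=
  ⟨CycleRel'.gen_two_mul_loopAtThree_mul_gen_two, CycleRel'.loopAtThree_ne_zero,
    CycleRel'.loopAtThree_mul_self⟩
end

section
/- Let k be a field of characteristic ≠ 2, G the quiver 1 →^α 2 →^β 3 with an extra arrow γ : 1 → 3, and Λ = kG/(βα). Consider the differential Λ-modules Q₁ = (P₁, 0) and the two cones C = (P₁ ⊕ P₂ ⊕ P₃, d) and C' = (P₁ ⊕ P₂ ⊕ P₃, d') where d has components α : P₁ → P₂, γ : P₁ → P₃, β : P₂ → P₃ and d' has components α : P₁ → P₂, γ : P₁ → P₃, −β : P₂ → P₃ (all other components zero). Then d² = 0 = d'², and C and C' are not isomorphic as differential Λ-modules. -/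
/-!
STATEMENT 17: Let char k ≠ 2, G the quiver 1 →^α 2 →^β 3 with an extra arrow γ : 1 → 3,
and Λ = kG/(βα).  The differential modules C = (P₁ ⊕ P₂ ⊕ P₃, d) and
C' = (P₁ ⊕ P₂ ⊕ P₃, d'), where d has components α : P₁ → P₂, γ : P₁ → P₃, β : P₂ → P₃
and d' has components α, γ, −β, satisfy d² = 0 = d'², but C and C' are not isomorphic as
differential Λ-modules.

We present Λ by generators X 0, X 1, X 2 (vertex idempotents e₁, e₂, e₃) and
X 3, X 4, X 5 (arrows α, β, γ), with the path-algebra relations and βα = 0.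
Morphisms P₁ ⊕ P₂ ⊕ P₃ → P₁ ⊕ P₂ ⊕ P₃ are 3×3 matrices over Λ whose (i,j) entry lies
in e_i Λ e_j; an isomorphism is such a matrix invertible with two-sided inverse of the
same shape, the identity being diag(e₁, e₂, e₃).
-/

open FreeAlgebra Matrix

variable (k : Type) [Field k]

/-- Defining relations of kG/(βα) for 1 →^α 2 →^β 3 with γ : 1 → 3. -/
inductive TriRel : FreeAlgebra k (Fin 6) → FreeAlgebra k (Fin 6) → Prop
  | orth (i j : Fin 3) :
      TriRel (ι k (Fin.castLE (by omega) i) * ι k (Fin.castLE (by omega) j))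
        (if i = j then ι k (Fin.castLE (by omega) i) else 0)
  | sum_idem : TriRel (ι k 0 + ι k 1 + ι k 2) 1
  | alpha : TriRel (ι k 3) (ι k 1 * ι k 3 * ι k 0)  -- α = e₂ α e₁
  | beta : TriRel (ι k 4) (ι k 2 * ι k 4 * ι k 1)   -- β = e₃ β e₂
  | gamma : TriRel (ι k 5) (ι k 2 * ι k 5 * ι k 0)  -- γ = e₃ γ e₁
  | ba : TriRel (ι k 4 * ι k 3) 0                   -- βα = 0

/-!
The algebra `Λ` is spanned by `e₁, e₂, e₃, α, β, γ`, and every product of two arrows vanishes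
(`βα = 0` is the only composable pair). Hence each corner `eᵢ Λ eⱼ` is spanned by the single path
from `j` to `i`, and a morphism `f` of `P₁ ⊕ P₂ ⊕ P₃` is a matrix of scalar multiples `tᵢⱼ` of
these paths. The entries `(2,1)`, `(3,1)`, `(3,2)` of `f d = d' f` read `t₂₂ α = t₁₁ α`,
`t₃₃ γ = t₁₁ γ` and `t₃₃ β = -t₂₂ β`, so `2 t₁₁ = 0` and `f₁₁ = 0`. Since `e₁ Λ e₂ = e₁ Λ e₃ = 0`,
an inverse `g` would give `e₁ = (g f)₁₁ = g₁₁ f₁₁ = 0`. The coefficients can be compared because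
the paths are nonzero, as representations of `Λ` on `k³` show.
-/

section OrthogonalIdempotents

variable {R ι : Type*} [Semiring R] {e : ι → R} {x y : R} {s t s' t' : ι}

theorem OrthogonalIdempotents.mul_eq_ite_left [DecidableEq ι] (he : OrthogonalIdempotents e)
    (hx : e t * x * e s = x) (i : ι) : e i * x = if i = t then x else 0 := by
  split_ifs with h
  · rw [h, ← hx, ← mul_assoc, ← mul_assoc, (he.idem t).eq]
  · rw [← hx, ← mul_assoc, ← mul_assoc, he.ortho h, zero_mul, zero_mul]

theorem OrthogonalIdempotents.mul_eq_ite_right [DecidableEq ι] (he : OrthogonalIdempotents e)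
    (hx : e t * x * e s = x) (j : ι) : x * e j = if s = j then x else 0 := by
  split_ifs with h
  · rw [← h, ← hx, mul_assoc, (he.idem s).eq]
  · rw [← hx, mul_assoc, he.ortho h, mul_zero]

theorem OrthogonalIdempotents.mul_eq_zero_of_ne (he : OrthogonalIdempotents e)
    (hx : e t * x * e s = x) (hy : e t' * y * e s' = y) (h : s ≠ t') : x * y = 0 := by
  rw [← hx, ← hy, mul_assoc, ← mul_assoc (e s), ← mul_assoc (e s), he.ortho h]
  simp

end OrthogonalIdempotents

theorem Submodule.span_eq_top_of_adjoin_eq_top {R A : Type*} [CommSemiring R] [Semiring A]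
    [Algebra R A] {s : Set A} (hs : Algebra.adjoin R s = ⊤) (h1 : 1 ∈ span R s)
    (hmul : ∀ x ∈ s, ∀ y ∈ s, x * y ∈ span R s) : span R s = ⊤ := by
  have hsq : span R s * span R s ≤ span R s := by
    rw [span_mul_span, span_le]
    rintro _ ⟨x, hx, y, hy, rfl⟩
    exact hmul x hx y hy
  rw [eq_top_iff, ← Algebra.top_toSubmodule, ← hs, Algebra.adjoin_toSubmodule_le]
  exact (Submonoid.closure_le (S := ((span R s).toSubalgebra h1 fun x y hx hy =>
    hsq (mul_mem_mul hx hy)).toSubmonoid)).2 subset_span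

theorem Matrix.strictLowerTriangular_mul_self_eq_zero {R : Type*} [NonUnitalNonAssocSemiring R]
    {x y z : R} (h : y * x = 0) :
    !![0, 0, 0; x, 0, 0; z, y, 0] * !![0, 0, 0; x, 0, 0; z, y, 0] = 0 := by
  ext i j
  fin_cases i <;> fin_cases j <;> simp [mul_apply, Fin.sum_univ_three, h]

namespace TriRel

open Set Submodule

/-- Vertices are numbered from `0`: `vertex i` is `e_{i+1}`, and `arrow 0, arrow 1, arrow 2` are
`α, β, γ`, with sources `src` and targets `tgt`. -/
noncomputable def vertex (i : Fin 3) : RingQuot (TriRel k) :=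
  RingQuot.mkAlgHom k (TriRel k) (ι k (Fin.castAdd 3 i))

noncomputable def arrow (l : Fin 3) : RingQuot (TriRel k) :=
  RingQuot.mkAlgHom k (TriRel k) (ι k (Fin.natAdd 3 l))

def src : Fin 3 → Fin 3 := ![0, 1, 0]

def tgt : Fin 3 → Fin 3 := ![1, 2, 2]

theorem completeOrthogonalIdempotents_vertex : CompleteOrthogonalIdempotents (vertex k) := by
  refine ⟨OrthogonalIdempotents.iff_mul_eq.2 fun i j => ?_, ?_⟩
  · have h := RingQuot.mkAlgHom_rel k (TriRel.orth (k := k) i j)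
    rw [map_mul, apply_ite (RingQuot.mkAlgHom k (TriRel k)), map_zero] at h
    exact h
  · have h := RingQuot.mkAlgHom_rel k (TriRel.sum_idem (k := k))
    rw [map_add, map_add, map_one] at h
    rw [Fin.sum_univ_three]
    exact h

theorem vertex_mul_arrow_mul_vertex (l : Fin 3) :
    vertex k (tgt l) * arrow k l * vertex k (src l) = arrow k l := by
  fin_cases l <;> simp only [vertex, arrow, ← map_mul]
  exacts [(RingQuot.mkAlgHom_rel k (TriRel.alpha (k := k))).symm,
    (RingQuot.mkAlgHom_rel k (TriRel.beta (k := k))).symm,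
    (RingQuot.mkAlgHom_rel k (TriRel.gamma (k := k))).symm]

@[simp]
theorem vertex_mul_vertex (i j : Fin 3) :
    vertex k i * vertex k j = if i = j then vertex k i else 0 :=
  (completeOrthogonalIdempotents_vertex k).mul_eq i j

@[simp]
theorem vertex_mul_arrow (i l : Fin 3) :
    vertex k i * arrow k l = if i = tgt l then arrow k l else 0 :=
  (completeOrthogonalIdempotents_vertex k).mul_eq_ite_left (vertex_mul_arrow_mul_vertex k l) i

@[simp]
theorem arrow_mul_vertex (l j : Fin 3) :
    arrow k l * vertex k j = if src l = j then arrow k l else 0 :=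
  (completeOrthogonalIdempotents_vertex k).mul_eq_ite_right (vertex_mul_arrow_mul_vertex k l) j

@[simp]
theorem arrow_mul_arrow (l m : Fin 3) : arrow k l * arrow k m = 0 := by
  by_cases h : src l = tgt m
  · obtain ⟨rfl, rfl⟩ : l = 1 ∧ m = 0 := by revert l m; decide
    simp only [arrow, ← map_mul]
    exact (RingQuot.mkAlgHom_rel k (TriRel.ba (k := k))).trans (map_zero _)
  · exact (completeOrthogonalIdempotents_vertex k).mul_eq_zero_of_ne
      (vertex_mul_arrow_mul_vertex k l) (vertex_mul_arrow_mul_vertex k m) h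

theorem adjoin_vertex_arrow : Algebra.adjoin k (range (vertex k) ∪ range (arrow k)) = ⊤ := by
  have hι : Algebra.adjoin k (range (RingQuot.mkAlgHom k (TriRel k) ∘ ι k)) = ⊤ := by
    rw [range_comp, Algebra.adjoin_image, FreeAlgebra.adjoin_range_ι, Algebra.map_top,
      AlgHom.range_eq_top]
    exact RingQuot.mkAlgHom_surjective k (TriRel k)
  refine top_le_iff.1 (hι ▸ Algebra.adjoin_mono ?_)
  rintro _ ⟨n, rfl⟩
  exact Fin.addCases (m := 3) (n := 3) (fun i => .inl ⟨i, rfl⟩) (fun l => .inr ⟨l, rfl⟩) n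

theorem span_vertex_arrow : span k (range (vertex k) ∪ range (arrow k)) = ⊤ := by
  refine span_eq_top_of_adjoin_eq_top (adjoin_vertex_arrow k) ?_ ?_
  · rw [← (completeOrthogonalIdempotents_vertex k).complete]
    exact sum_mem fun i _ => subset_span (.inl ⟨i, rfl⟩)
  · rintro _ (⟨i, rfl⟩ | ⟨l, rfl⟩) _ (⟨j, rfl⟩ | ⟨m, rfl⟩) <;>
      simp only [vertex_mul_vertex, vertex_mul_arrow, arrow_mul_vertex, arrow_mul_arrow] <;>
      try split_ifs
    all_goals first | exact zero_mem _ | exact subset_span (by simp)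

noncomputable def path : Matrix (Fin 3) (Fin 3) (RingQuot (TriRel k)) :=
  !![vertex k 0, 0, 0; arrow k 0, vertex k 1, 0; arrow k 2, arrow k 1, vertex k 2]

theorem path_self (i : Fin 3) : path k i i = vertex k i := by
  fin_cases i <;> rfl

theorem path_tgt_src (l : Fin 3) : path k (tgt l) (src l) = arrow k l := by
  fin_cases l <;> rfl

theorem vertex_mul_mul_vertex_mem_span_path (x : RingQuot (TriRel k)) (i j : Fin 3) :
    vertex k i * x * vertex k j ∈ k ∙ path k i j := by
  have hgen : span k (range (vertex k) ∪ range (arrow k)) ≤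
      (k ∙ path k i j).comap (LinearMap.mulLeftRight k (vertex k i, vertex k j)) := by
    rw [span_le]
    rintro _ (⟨l, rfl⟩ | ⟨l, rfl⟩) <;>
      simp only [SetLike.mem_coe, mem_comap, LinearMap.mulLeftRight_apply, vertex_mul_vertex,
        vertex_mul_arrow, arrow_mul_vertex, ite_mul, zero_mul] <;>
      split_ifs with h₁ h₂ <;>
      first | exact zero_mem _ | skip
    · subst h₁ h₂
      rw [path_self]
      exact mem_span_singleton_self _
    · subst h₁ h₂
      rw [path_tgt_src]
      exact mem_span_singleton_self _
  exact hgen (span_vertex_arrow k ▸ mem_top)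

/-- `Λ` acting on `k³` by `vertex i ↦ single i i 1` and `arrow l ↦ single (tgt l) (src l) (p l)`;
the condition on `p` is the relation `βα = 0`. -/
noncomputable def toMatrix (p : Fin 3 → k) (hp : p 1 * p 0 = 0) :
    RingQuot (TriRel k) →ₐ[k] Matrix (Fin 3) (Fin 3) k :=
  RingQuot.liftAlgHom k ⟨FreeAlgebra.lift k (Fin.append (fun i => single i i 1)
    fun l => single (tgt l) (src l) (p l)), by
    rintro _ _ (⟨i, j⟩ | _ | _ | _ | _ | _)
    · fin_cases i <;> fin_cases j <;> simp [Fin.append, Fin.addCases, tgt, src]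
    all_goals simp [Fin.append, Fin.addCases, tgt, src, hp, ← sum_single_one, Fin.sum_univ_three]⟩

theorem toMatrix_vertex (p : Fin 3 → k) (hp : p 1 * p 0 = 0) (i : Fin 3) :
    toMatrix k p hp (vertex k i) = single i i 1 := by
  rw [toMatrix, vertex, RingQuot.liftAlgHom_mkAlgHom_apply, FreeAlgebra.lift_ι_apply,
    Fin.append_left]

theorem toMatrix_arrow (p : Fin 3 → k) (hp : p 1 * p 0 = 0) (l : Fin 3) :
    toMatrix k p hp (arrow k l) = single (tgt l) (src l) (p l) := by
  rw [toMatrix, arrow, RingQuot.liftAlgHom_mkAlgHom_apply, FreeAlgebra.lift_ι_apply,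
    Fin.append_right]

theorem vertex_ne_zero (i : Fin 3) : vertex k i ≠ 0 := by
  intro h
  have h' := congr_fun₂ (congr_arg (toMatrix k 0 (mul_zero 0)) h) i i
  rw [toMatrix_vertex, map_zero, single_apply_same] at h'
  exact one_ne_zero h'

theorem arrow_ne_zero (l : Fin 3) : arrow k l ≠ 0 := by
  set p : Fin 3 → k := Pi.single l 1
  have hp : p 1 * p 0 = 0 := by fin_cases l <;> simp [p]
  intro h
  have h' := congr_fun₂ (congr_arg (toMatrix k p hp) h) (tgt l) (src l)
  rw [toMatrix_arrow, map_zero, single_apply_same] at h'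
  simp [p] at h'

theorem exists_eq_smul_path {f : Matrix (Fin 3) (Fin 3) (RingQuot (TriRel k))}
    (hf : diagonal (vertex k) * f * diagonal (vertex k) = f) (i j : Fin 3) :
    ∃ t : k, f i j = t • path k i j := by
  obtain ⟨t, ht⟩ :=
    Submodule.mem_span_singleton.1 (vertex_mul_mul_vertex_mem_span_path k (f i j) i j)
  refine ⟨t, ?_⟩
  rw [ht]
  conv_lhs => rw [← hf]
  rw [mul_diagonal, diagonal_mul]

theorem apply_zero_zero_eq_zero_of_mul_eq_mul (h2 : (2 : k) ≠ 0)
    {f : Matrix (Fin 3) (Fin 3) (RingQuot (TriRel k))}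
    (hf : diagonal (vertex k) * f * diagonal (vertex k) = f)
    (hcomm : f * !![0, 0, 0; arrow k 0, 0, 0; arrow k 2, arrow k 1, 0] =
      !![0, 0, 0; arrow k 0, 0, 0; arrow k 2, -arrow k 1, 0] * f) :
    f 0 0 = 0 := by
  choose t ht using exists_eq_smul_path k hf
  have hcoeff {l : Fin 3} {u v : k} (h : u • arrow k l = v • arrow k l) : u = v :=
    smul_left_injective k (arrow_ne_zero k l) h
  obtain ⟨h10, h20, h21⟩ : t 1 1 • arrow k 0 = t 0 0 • arrow k 0 ∧
      t 2 2 • arrow k 2 = t 0 0 • arrow k 2 ∧ t 2 2 • arrow k 1 = -(t 1 1 • arrow k 1) := by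
    -- `neg_mul`'s `HasDistribNeg` argument cannot be unified against `RingQuot`'s `Neg` instance
    simpa [mul_apply, Fin.sum_univ_three, ht, path, src, tgt,
      neg_mul (α := RingQuot (TriRel k))] using
      And.intro (congr_fun₂ hcomm 1 0) (And.intro (congr_fun₂ hcomm 2 0) (congr_fun₂ hcomm 2 1))
  have hx : 2 * t 0 0 = 0 := by
    linear_combination hcoeff (h21.trans (neg_smul (t 1 1) (arrow k 1)).symm) - hcoeff h20 -
      hcoeff h10
  rw [ht, (mul_eq_zero.1 hx).resolve_left h2, zero_smul]

theorem apply_zero_zero_ne_zero_of_mul_eq_diagonal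
    {f g : Matrix (Fin 3) (Fin 3) (RingQuot (TriRel k))}
    (hg : diagonal (vertex k) * g * diagonal (vertex k) = g) (hgf : g * f = diagonal (vertex k)) :
    f 0 0 ≠ 0 := by
  choose s hs using exists_eq_smul_path k hg
  intro hf
  apply vertex_ne_zero k 0
  simpa [mul_apply, Fin.sum_univ_three, hs, path, hf] using (congr_fun₂ hgf 0 0).symm

end TriRel

open TriRel

theorem cones_not_isomorphic (h2 : (2 : k) ≠ 0) :
    letI Λ := RingQuot (TriRel k)
    letI e₁ : Λ := RingQuot.mkAlgHom k (TriRel k) (ι k 0)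
    letI e₂ : Λ := RingQuot.mkAlgHom k (TriRel k) (ι k 1)
    letI e₃ : Λ := RingQuot.mkAlgHom k (TriRel k) (ι k 2)
    letI a : Λ := RingQuot.mkAlgHom k (TriRel k) (ι k 3)  -- α
    letI b : Λ := RingQuot.mkAlgHom k (TriRel k) (ι k 4)  -- β
    letI c : Λ := RingQuot.mkAlgHom k (TriRel k) (ι k 5)  -- γ
    letI d : Matrix (Fin 3) (Fin 3) Λ := !![0, 0, 0; a, 0, 0; c, b, 0]
    letI d' : Matrix (Fin 3) (Fin 3) Λ := !![0, 0, 0; a, 0, 0; c, -b, 0]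
    letI idm : Matrix (Fin 3) (Fin 3) Λ := Matrix.diagonal ![e₁, e₂, e₃]
    -- d and d' are differentials
    (d * d = 0 ∧ d' * d' = 0) ∧
    -- C and C' are not isomorphic as differential modules
    ¬ (∃ f g : Matrix (Fin 3) (Fin 3) Λ,
        idm * f * idm = f ∧ idm * g * idm = g ∧
        f * g = idm ∧ g * f = idm ∧
        f * d = d' * f) := by
  have hidm : ![RingQuot.mkAlgHom k (TriRel k) (ι k 0), RingQuot.mkAlgHom k (TriRel k) (ι k 1),
      RingQuot.mkAlgHom k (TriRel k) (ι k 2)] = vertex k := by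
    ext i
    fin_cases i <;> rfl
  refine ⟨⟨strictLowerTriangular_mul_self_eq_zero (arrow_mul_arrow k 1 0),
    strictLowerTriangular_mul_self_eq_zero (by
      rw [neg_mul (α := RingQuot (TriRel k)), neg_eq_zero]
      exact arrow_mul_arrow k 1 0)⟩, ?_⟩
  rintro ⟨f, g, hf, hg, -, hgf, hcomm⟩
  rw [hidm] at hf hg hgf
  exact apply_zero_zero_ne_zero_of_mul_eq_diagonal k hg hgf
    (apply_zero_zero_eq_zero_of_mul_eq_mul k h2 hf hcomm)
end
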